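/- Let w_1,...,w_q be vectors in R^n and let \bar{w} be their coordinatewise average. For each i, independently select a uniformly random subset of s coordinates of [n] without replacement, and let \delta_{i\ell}=1 if coordinate \ell of w_i is selected and 0 otherwise; set \delta_\ell = \sum_i \delta_{i\ell}. Define \bar{v}_\ell = (1/\delta_\ell) \sum_i \delta_{i\ell} w_{i\ell} when \delta_\ell > 0. Then the conditional expectation E[\bar{v}_\ell | \delta_\ell > 0] = \bar{w}_\ell. -/

import Mathlib

open Finset

/-- Unbiasedness of the PME average conditioned on the coordinate being received:
`E[v̄_ℓ | δ_ℓ > 0] = w̄_ℓ`, stated over the finite probability space of independent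
uniform choices of `s`-element coordinate subsets for each of the `q` vectors. -/
theorem stmt0 (q n s : ℕ) (hq : 0 < q) (hs : 1 ≤ s) (hsn : s ≤ n)
    (w : Fin q → Fin n → ℝ) (ℓ : Fin n)
    (P : (Fin q → Finset (Fin n)) → ℝ)
    (hP : ∀ ω, P ω = ∏ i, if (ω i).card = s then ((n.choose s : ℝ))⁻¹ else 0)
    (δ : (Fin q → Finset (Fin n)) → Fin n → ℕ)
    (hδ : ∀ ω ℓ', δ ω ℓ' = (Finset.univ.filter (fun i => ℓ' ∈ ω i)).card)
    (v : (Fin q → Finset (Fin n)) → ℝ)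
    (hv : ∀ ω, v ω = (∑ i ∈ Finset.univ.filter (fun i => ℓ ∈ ω i), w i ℓ) / (δ ω ℓ))
    (A : Finset (Fin q → Finset (Fin n)))
    (hA : A = Finset.univ.filter (fun ω => 0 < δ ω ℓ)) :
    (∑ ω ∈ A, P ω * v ω) / (∑ ω ∈ A, P ω) = (∑ i, w i ℓ) / q := by
  classical
  set i0 : Fin q := ⟨0, hq⟩ with hi0
  -- invariance of P under permuting the q vectors
  have hPperm : ∀ (σ : Equiv.Perm (Fin q)) ω, P (ω ∘ σ) = P ω := by
    intro σ ω
    rw [hP, hP]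
    exact Equiv.prod_comp σ (fun i => if (ω i).card = s then ((n.choose s : ℝ))⁻¹ else 0)
  -- invariance of δ
  have hδperm : ∀ (σ : Equiv.Perm (Fin q)) ω ℓ', δ (ω ∘ σ) ℓ' = δ ω ℓ' := by
    intro σ ω ℓ'
    rw [hδ, hδ]
    apply Finset.card_equiv σ
    intro k
    simp
  -- the per-index expected weight
  set T : Fin q → ℝ := fun i =>
    ∑ ω ∈ A, P ω * ((if ℓ ∈ ω i then (1:ℝ) else 0) / (δ ω ℓ)) with hT
  have hTeq : ∀ i, T i = T i0 := by
    intro i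
    rw [hT]
    refine Finset.sum_equiv (Equiv.arrowCongr (Equiv.swap i i0) (Equiv.refl _)) ?_ ?_
    · intro ω
      have : (Equiv.arrowCongr (Equiv.swap i i0) (Equiv.refl (Finset (Fin n)))) ω
          = ω ∘ (Equiv.swap i i0) := by
        funext k
        simp [Equiv.arrowCongr, Equiv.symm_swap]
      rw [this, hA]
      simp only [Finset.mem_filter, Finset.mem_univ, true_and]
      rw [hδperm (Equiv.swap i i0) ω ℓ]
    · intro ω _
      have hco : (Equiv.arrowCongr (Equiv.swap i i0) (Equiv.refl (Finset (Fin n)))) ω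
          = ω ∘ (Equiv.swap i i0) := by
        funext k
        simp [Equiv.arrowCongr, Equiv.symm_swap]
      rw [hco, hPperm (Equiv.swap i i0) ω, hδperm (Equiv.swap i i0) ω ℓ]
      simp [Equiv.swap_apply_right]
  -- sum of T over i equals the total mass Y
  set Y : ℝ := ∑ ω ∈ A, P ω with hY
  have hsumT : ∑ i, T i = Y := by
    rw [hT, hY, Finset.sum_comm]
    apply Finset.sum_congr rfl
    intro ω hω
    have hpos : 0 < δ ω ℓ := by
      rw [hA] at hω
      exact (Finset.mem_filter.mp hω).2
    have hne : (δ ω ℓ : ℝ) ≠ 0 := by positivity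
    rw [← Finset.mul_sum, ← Finset.sum_div]
    rw [Finset.sum_boole, ← hδ ω ℓ]
    field_simp
  -- Y is positive
  have hYpos : 0 < Y := by
    obtain ⟨S, hSsub, -, hScard⟩ :=
      Finset.exists_subsuperset_card_eq (Finset.singleton_subset_iff.mpr
        (Finset.mem_univ ℓ)) (by simpa using hs) (by simpa using hsn)
    set ω0 : Fin q → Finset (Fin n) := fun _ => S with hω0
    have hmem : ω0 ∈ A := by
      rw [hA]
      simp only [Finset.mem_filter, Finset.mem_univ, true_and]
      rw [hδ]
      have : (Finset.univ.filter (fun i : Fin q => ℓ ∈ ω0 i)) = Finset.univ := by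
        apply Finset.filter_true_of_mem
        intro i _
        exact hSsub (Finset.mem_singleton_self ℓ)
      rw [this]
      simpa using hq
    have hchoose : (0:ℝ) < ((n.choose s : ℝ))⁻¹ := by
      have : 0 < n.choose s := Nat.choose_pos hsn
      positivity
    have hPpos : 0 < P ω0 := by
      rw [hP]
      apply Finset.prod_pos
      intro i _
      simp only [hω0, hScard, if_true]
      exact hchoose
    rw [hY]
    apply Finset.sum_pos'
    · intro ω _
      rw [hP]
      apply Finset.prod_nonneg
      intro i _
      split <;> positivity
    · exact ⟨ω0, hmem, hPpos⟩
  -- main computation: numerator equals (∑ w) * T i0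
  have hnum : ∑ ω ∈ A, P ω * v ω = (∑ i, w i ℓ) * T i0 := by
    have : ∀ ω ∈ A, P ω * v ω
        = ∑ i, w i ℓ * (P ω * ((if ℓ ∈ ω i then (1:ℝ) else 0) / (δ ω ℓ))) := by
      intro ω _
      rw [hv]
      rw [Finset.sum_filter]
      rw [Finset.sum_div, Finset.mul_sum]
      apply Finset.sum_congr rfl
      intro i _
      split <;> ring
    rw [Finset.sum_congr rfl this, Finset.sum_comm]
    rw [Finset.sum_mul]
    apply Finset.sum_congr rfl
    intro i _
    rw [← Finset.mul_sum, ← hTeq i]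
  -- conclude
  have hTi0 : T i0 = Y / q := by
    have : (q : ℝ) * T i0 = Y := by
      rw [← hsumT]
      rw [Finset.sum_congr rfl (fun i _ => hTeq i)]
      simp [mul_comm]
    field_simp at this ⊢
    linarith
  rw [hnum, hTi0]
  have hqne : (q : ℝ) ≠ 0 := by positivity
  field_simp
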